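/- arXiv:quant-ph/0607073 — 2 statements merged into one kernel-verified Lean document; each statement's English description precedes it below -/
import Mathlib

section
/- For all real parameters a, b, c, d, the matrix S_8^{(4)}(a,b,c,d) = S_8 ∘ EXP(i·R(a,b,c,d)) is a complex Hadamard matrix, where R is the 8×8 affine phase matrix with rows (0,...,0), (0,d,a,a−d,d,0,a−d,a), (0,d,a,a−d,d,0,a−d,a), (0,d,d,0,b,b−d,b−d,b), (0,c,d,c−d,d,c−d,0,c), (0,c,d,c−d,d,c−d,0,c), (0,...,0), (0,d,d,0,b,b−d,b−d,b). -/
open Matrix Complex Real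

/-- A complex Hadamard matrix: all entries unimodular and rows pairwise orthogonal. -/
def IsCHadamard {ι : Type*} [Fintype ι] [DecidableEq ι] (H : Matrix ι ι ℂ) : Prop :=
  (∀ i j, ‖H i j‖ = 1) ∧ H * Hᴴ = (Fintype.card ι : ℂ) • 1

/-- The log-matrix (times 4) of `S₈`. -/
def M8 : Matrix (Fin 8) (Fin 8) ℕ :=
  !![0,0,0,0,0,0,0,0;
     0,2,1,3,0,2,1,3;
     0,2,3,1,0,2,3,1;
     0,0,2,2,1,1,3,3;
     0,1,0,1,2,3,2,3;
     0,3,0,3,2,1,2,1;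
     0,2,2,0,2,0,0,2;
     0,0,2,2,3,3,1,1]

/-- The affine phase matrix `R⁽⁴⁾₈(a,b,c,d)`. -/
def R8 (a b c d : ℝ) : Matrix (Fin 8) (Fin 8) ℝ :=
  !![0,0,0,0,0,0,0,0;
     0,d,a,a-d,d,0,a-d,a;
     0,d,a,a-d,d,0,a-d,a;
     0,d,d,0,b,b-d,b-d,b;
     0,c,d,c-d,d,c-d,0,c;
     0,c,d,c-d,d,c-d,0,c;
     0,0,0,0,0,0,0,0;
     0,d,d,0,b,b-d,b-d,b]

/-!
Write each entry as `I ^ M j k * exp (I * R j k)`. Then the inner product of rows `j` and `k`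
is `∑ l, I ^ (M j l - M k l) * exp (I * (R j l - R k l))`, a sum of eight fourth roots of unity
weighted by phases that are integer combinations of `a, b, c, d`. For every pair of rows, the
columns on which `R j l - R k l` takes a given value carry fourth roots of unity summing to zero,
so the sum vanishes identically in the parameters. Since `H * Hᴴ` is Hermitian, only the pairs
`j < k` need to be checked.
-/

theorem isCHadamard_of_orthogonal {ι : Type*} [Fintype ι] [DecidableEq ι] [LinearOrder ι]
    (H : Matrix ι ι ℂ) (hnorm : ∀ i j, ‖H i j‖ = 1)
    (horth : ∀ i j, i < j → ∑ l, H i l * star (H j l) = 0) : IsCHadamard H := by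
  refine ⟨hnorm, ?_⟩
  ext i j
  simp only [mul_apply, conjTranspose_apply, Matrix.smul_apply, one_apply, smul_eq_mul]
  rcases lt_trichotomy i j with h | rfl | h
  · rw [horth i j h, if_neg h.ne, mul_zero]
  · simp [mul_conj', hnorm]
  · rw [if_neg h.ne', mul_zero, ← star_eq_zero, star_sum, ← horth j i h]
    simp [mul_comm]

theorem exp_two_pi_mul_I_mul_div_four (m : ℕ) : exp (2 * π * I * m / 4) = I ^ m := by
  rw [show 2 * π * I * m / 4 = m * (π / 2 * I) by ring, Complex.exp_nat_mul,
    exp_pi_div_two_mul_I]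

theorem norm_I_pow_mul_exp_ofReal_mul_I (m : ℕ) (r : ℝ) : ‖I ^ m * exp (I * r)‖ = 1 := by
  rw [norm_mul, norm_pow, norm_I, one_pow, one_mul, mul_comm, norm_exp_ofReal_mul_I]

theorem star_I_pow (m : ℕ) : star (I ^ m) = I ^ (3 * m) := by
  rw [star_pow, pow_mul, I_pow_three]
  simp

theorem star_exp_I_mul_ofReal (r : ℝ) : star (exp (I * r)) = (exp (I * r))⁻¹ := by
  rw [← Complex.exp_neg, star_def, ← exp_conj]
  simp

theorem I_pow_mul_exp_mul_star_I_pow_mul_exp (m m' : ℕ) (r r' : ℝ) :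
    I ^ m * exp (I * r) * star (I ^ m' * exp (I * r')) =
      I ^ ((m + 3 * m') % 4) * exp (I * ↑(r - r')) := by
  rw [← I_pow_eq_pow_mod, pow_add, star_mul', star_I_pow, star_exp_I_mul_ofReal, ofReal_sub,
    mul_sub, Complex.exp_sub]
  ring

/-- The 4-parameter affine family `S₈⁽⁴⁾(a,b,c,d) = S₈ ∘ EXP(i·R⁽⁴⁾₈(a,b,c,d))`
consists of complex Hadamard matrices, for all real `a, b, c, d`. -/
theorem S8_family_isHadamard (a b c d : ℝ) :
    IsCHadamard (Matrix.of fun j k : Fin 8 =>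
      Complex.exp (2 * π * Complex.I * (M8 j k : ℂ) / 4) *
        Complex.exp (Complex.I * (R8 a b c d j k : ℂ))) := by
  simp only [exp_two_pi_mul_I_mul_div_four]
  refine isCHadamard_of_orthogonal _ (fun j k => norm_I_pow_mul_exp_ofReal_mul_I _ _) ?_
  intro j k hjk
  simp only [of_apply, I_pow_mul_exp_mul_star_I_pow_mul_exp, Fin.sum_univ_eight]
  fin_cases j <;> fin_cases k <;> simp [M8, R8] at hjk ⊢ <;> ring_nf
end

section
/- The log-matrix of S_12 (= N/36 with N the given 12×12 integer matrix) contains no 2×6, 3×4, 4×3, or 6×2 all-zero submatrix other than those meeting only the first row and first column trivially; more precisely, after normalizing so the first row and column are zero, there is no a×b all-zero submatrix with {a,b} ∈ {{2,6},{3,4}} whose row set and column set both have size ≥ 2 beyond index 1. Consequently S_12 is not of Dita type. -/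
open Matrix Complex Real Finset

/-- The integer matrix `N` of `S₁₂` (entries of `log S₁₂` are `N/36`). -/
def N12 : Matrix (Fin 12) (Fin 12) ℕ :=
  !![0,0,0,0,0,0,0,0,0,0,0,0;
     0,24,12,0,24,12,0,24,12,0,24,12;
     0,12,24,9,21,33,0,12,24,9,21,33;
     0,24,12,18,6,30,0,24,12,18,6,30;
     0,12,24,27,3,15,0,12,24,27,3,15;
     0,0,0,18,18,18,9,9,9,27,27,27;
     0,4,8,0,4,8,18,22,26,18,22,26;
     0,16,32,0,16,32,18,34,14,18,34,14;
     0,28,20,0,28,20,18,10,2,18,10,2;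
     0,12,24,18,30,6,18,30,6,0,12,24;
     0,24,12,18,6,30,18,6,30,0,24,12;
     0,0,0,18,18,18,27,27,27,9,9,9]

/-- The matrix `S₁₂`. -/
noncomputable def S12 : Matrix (Fin 12) (Fin 12) ℂ :=
  Matrix.of fun j k : Fin 12 => Complex.exp (2 * π * Complex.I * (N12 j k : ℂ) / 36)

/-- Equivalence of `12×12` complex Hadamard matrices: `K' = D₁P₁KP₂D₂` with
`D₁, D₂` unitary diagonal and `P₁, P₂` permutation matrices. -/
def HadEquiv12 (K K' : Matrix (Fin 12) (Fin 12) ℂ) : Prop :=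
  ∃ (d1 d2 : Fin 12 → ℂ) (p1 p2 : Equiv.Perm (Fin 12)),
    (∀ i, ‖d1 i‖ = 1) ∧ (∀ i, ‖d2 i‖ = 1) ∧
    K' = Matrix.diagonal d1 * p1.permMatrix ℂ * K * p2.permMatrix ℂ * Matrix.diagonal d2

/-- A `12×12` matrix is of Dita type if it is equivalent to a matrix arising from
Dita's construction with a `k×k` Hadamard matrix `M` and `n×n` Hadamard matrices
`N₁,…,N_k` (with `k, n ≥ 2`, `kn = 12`). -/
def IsDitaType12 (K : Matrix (Fin 12) (Fin 12) ℂ) : Prop :=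
  ∃ (k n : ℕ) (M : Matrix (Fin k) (Fin k) ℂ) (Ns : Fin k → Matrix (Fin n) (Fin n) ℂ)
    (e : Fin 12 ≃ Fin k × Fin n) (K' : Matrix (Fin 12) (Fin 12) ℂ),
    2 ≤ k ∧ 2 ≤ n ∧ IsCHadamard M ∧ (∀ j, IsCHadamard (Ns j)) ∧
    (∀ x y : Fin 12, K' x y = M (e x).1 (e y).1 * Ns (e y).1 (e x).2 (e y).2) ∧
    HadEquiv12 K K'

/-!
In Dita's form `K' x y = M (x₁, y₁) · N_{y₁} (x₂, y₂)`, the rows with a fixed second coordinate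
`x₂` and the columns with a fixed first coordinate `y₁` cut out a `k × n` block on which every
`2 × 2` minor vanishes, and this survives permuting rows and columns and rescaling them by
nonzero diagonals. In a dephased matrix such a block through the entry `(0, 0)` consists of ones,
i.e. of zeros of the log-matrix. The log-matrix of `S₁₂` has no such block: apart from the first
row and column, row 1 has four zeros mod 36, rows 5 and 11 have three, every other row has at
most two, rows 1 and 5 share only column 0, and every column has at most five.
-/

lemma card_le_of_block {ι κ : Type*} [Fintype κ] {P : ι → κ → Prop} [∀ i j, Decidable (P i j)]
    {R s : Finset ι} {C : Finset κ} {m : ℕ} (hRC : ∀ r ∈ R, ∀ c ∈ C, P r c) (hRs : ¬ R ⊆ s)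
    (hm : ∀ r ∉ s, #{c | P r c} ≤ m) : #C ≤ m := by
  obtain ⟨r, hr, hrs⟩ := not_subset.1 hRs
  exact (card_le_card fun c hc => mem_filter.2 ⟨mem_univ c, hRC r hr c hc⟩).trans (hm r hrs)

lemma card_filter_equiv_snd_eq {ι α β : Type*} [Fintype ι] [Fintype α] [DecidableEq β]
    (f : ι ≃ α × β) (b : β) : #{u | (f u).2 = b} = Fintype.card α := by
  have : ({u | (f u).2 = b} : Finset ι).map f.toEmbedding = univ ×ˢ {b} := by
    ext ⟨a, b'⟩
    simp [eq_comm]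
  rw [← card_map, this, card_product, card_singleton, mul_one, card_univ]

lemma card_filter_equiv_fst_eq {ι α β : Type*} [Fintype ι] [DecidableEq α] [Fintype β]
    (f : ι ≃ α × β) (a : α) : #{u | (f u).1 = a} = Fintype.card β :=
  card_filter_equiv_snd_eq (f.trans (Equiv.prodComm α β)) a

lemma pair_mem_of_mul_eq_twelve {k n : ℕ} (hk : 2 ≤ k) (hn : 2 ≤ n) (h : k * n = 12) :
    (k, n) ∈ ([(2,6), (6,2), (3,4), (4,3)] : List (ℕ × ℕ)) := by
  have : k ≤ 6 := by nlinarith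
  interval_cases k <;> simp <;> omega

lemma exp_two_pi_I_mul_div_eq_one_iff {a q : ℕ} (hq : q ≠ 0) :
    exp (2 * π * I * a / q) = 1 ↔ q ∣ a := by
  rw [← (Complex.isPrimitiveRoot_exp q hq).pow_eq_one_iff_dvd, ← Complex.exp_nat_mul]
  ring_nf

section Scaling

variable {ι R : Type*} [Fintype ι] [DecidableEq ι] [CommRing R]

lemma diagonal_mul_permMatrix_mul_mul_permMatrix_mul_diagonal_apply (d₁ d₂ : ι → R)
    (σ τ : Equiv.Perm ι) (A : Matrix ι ι R) (x y : ι) :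
    (diagonal d₁ * σ.permMatrix R * A * τ.permMatrix R * diagonal d₂) x y
      = d₁ x * A (σ x) (τ.symm y) * d₂ y := by
  rw [Matrix.mul_assoc (diagonal d₁), PEquiv.toMatrix_toPEquiv_mul,
    PEquiv.mul_toMatrix_toPEquiv, mul_diagonal]
  simp [diagonal_mul]

lemma mul_eq_mul_of_diagonal_mul_permMatrix [IsDomain R] {d₁ d₂ : ι → R}
    (hd₁ : ∀ i, d₁ i ≠ 0) (hd₂ : ∀ i, d₂ i ≠ 0) {σ τ : Equiv.Perm ι} {A B : Matrix ι ι R}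
    (hB : B = diagonal d₁ * σ.permMatrix R * A * τ.permMatrix R * diagonal d₂) {x x' y y' : ι}
    (h : B x y * B x' y' = B x y' * B x' y) :
    A (σ x) (τ.symm y) * A (σ x') (τ.symm y') = A (σ x) (τ.symm y') * A (σ x') (τ.symm y) := by
  simp only [hB, diagonal_mul_permMatrix_mul_mul_permMatrix_mul_diagonal_apply] at h
  refine mul_left_cancel₀ (a := d₁ x * d₁ x' * d₂ y * d₂ y')
    (by simp [hd₁, hd₂]) ?_
  linear_combination h

end Scaling

lemma IsDitaType12.exists_block_eq_one {K : Matrix (Fin 12) (Fin 12) ℂ} (hK : IsDitaType12 K)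
    (hrow : ∀ v, K 0 v = 1) (hcol : ∀ u, K u 0 = 1) :
    ∃ R C : Finset (Fin 12), (#R, #C) ∈ ([(2,6), (6,2), (3,4), (4,3)] : List (ℕ × ℕ)) ∧
      ∀ u ∈ R, ∀ v ∈ C, K u v = 1 := by
  obtain ⟨k, n, M, Ns, e, K', hk, hn, -, -, hK', d₁, d₂, σ, τ, hd₁, hd₂, hB⟩ := hK
  have hd₁ : ∀ i, d₁ i ≠ 0 := fun i h => by simpa [h] using hd₁ i
  have hd₂ : ∀ i, d₂ i ≠ 0 := fun i h => by simpa [h] using hd₂ i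
  set R : Finset (Fin 12) := {u | (e (σ.symm u)).2 = (e (σ.symm 0)).2}
  set C : Finset (Fin 12) := {v | (e (τ v)).1 = (e (τ 0)).1}
  have hR : #R = k := (card_filter_equiv_snd_eq (σ.symm.trans e) _).trans (Fintype.card_fin k)
  have hC : #C = n := (card_filter_equiv_fst_eq (τ.trans e) _).trans (Fintype.card_fin n)
  have hkn : k * n = 12 := by simpa using (Fintype.card_congr e).symm
  refine ⟨R, C, hR ▸ hC ▸ pair_mem_of_mul_eq_twelve hk hn hkn, fun u hu v hv => ?_⟩
  have hminor := mul_eq_mul_of_diagonal_mul_permMatrix hd₁ hd₂ hB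
    (x := σ.symm u) (x' := σ.symm 0) (y := τ v) (y' := τ 0) (by
      simp only [R, C, mem_filter] at hu hv
      simp only [hK', hu.2, hv.2]
      ring)
  simpa [hrow, hcol] using hminor

lemma S12_apply_eq_one_iff (r c : Fin 12) : S12 r c = 1 ↔ N12 r c % 36 = 0 := by
  rw [← Nat.dvd_iff_mod_eq_zero, ← exp_two_pi_I_mul_div_eq_one_iff (by norm_num)]
  simp [S12]

lemma S12_zero_left (c : Fin 12) : S12 0 c = 1 :=
  (S12_apply_eq_one_iff 0 c).2 (by revert c; decide)

lemma S12_zero_right (r : Fin 12) : S12 r 0 = 1 :=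
  (S12_apply_eq_one_iff r 0).2 (by revert r; decide)

lemma N12_card_zeros_row_le_four :
    ∀ r ∉ ({0} : Finset (Fin 12)), #{c | N12 r c % 36 = 0} ≤ 4 := by decide

lemma N12_card_zeros_row_le_three :
    ∀ r ∉ ({0, 1} : Finset (Fin 12)), #{c | N12 r c % 36 = 0} ≤ 3 := by decide

lemma N12_card_zeros_row_le_two :
    ∀ r ∉ ({0, 1, 5, 11} : Finset (Fin 12)), #{c | N12 r c % 36 = 0} ≤ 2 := by decide

lemma N12_card_common_zeros_one_five : #{c | N12 1 c % 36 = 0 ∧ N12 5 c % 36 = 0} ≤ 1 := by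
  decide

lemma N12_card_zeros_col_le_five :
    ∀ c ∉ ({0} : Finset (Fin 12)), #{r | N12 r c % 36 = 0} ≤ 5 := by decide

lemma N12_no_zero_block : ∀ ab ∈ ([(2,6), (6,2), (3,4), (4,3)] : List (ℕ × ℕ)),
    ¬ ∃ R C : Finset (Fin 12), #R = ab.1 ∧ #C = ab.2 ∧ ∀ r ∈ R, ∀ c ∈ C, N12 r c % 36 = 0 := by
  intro ab hab
  fin_cases hab <;> rintro ⟨R, C, hR, hC, h⟩ <;> dsimp only at hR hC
  · have := card_le_of_block h (mt card_le_card (by rw [hR]; decide)) N12_card_zeros_row_le_four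
    omega
  · have := card_le_of_block (P := fun c r => N12 r c % 36 = 0) (fun c hc r hr => h r hr c hc)
      (mt card_le_card (by rw [hC]; decide)) N12_card_zeros_col_le_five
    omega
  · have := card_le_of_block h (mt card_le_card (by rw [hR]; decide)) N12_card_zeros_row_le_three
    omega
  · by_cases hRs : R ⊆ {0, 1, 5, 11}
    · have hR' : R = {0, 1, 5, 11} := eq_of_subset_of_card_le hRs (by rw [hR]; decide)
      have hsub : C ⊆ ({c | N12 1 c % 36 = 0 ∧ N12 5 c % 36 = 0} : Finset _) := fun c hc =>
        mem_filter.2 ⟨mem_univ c, h 1 (by simp [hR']) c hc, h 5 (by simp [hR']) c hc⟩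
      have := (card_le_card hsub).trans N12_card_common_zeros_one_five
      omega
    · have := card_le_of_block h hRs N12_card_zeros_row_le_two
      omega

/-- The log-matrix of `S₁₂` contains no `2×6`, `6×2`, `3×4` or `4×3` all-zero
submatrix; consequently `S₁₂` is not of Dita type. -/
theorem S12_no_zero_blocks_and_not_dita :
    (∀ ab : ℕ × ℕ, ab ∈ ([(2,6), (6,2), (3,4), (4,3)] : List (ℕ × ℕ)) →
      ¬ ∃ (R C : Finset (Fin 12)), R.card = ab.1 ∧ C.card = ab.2 ∧
        ∀ r ∈ R, ∀ c ∈ C, N12 r c % 36 = 0) ∧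
    ¬ IsDitaType12 S12 := by
  refine ⟨N12_no_zero_block, fun hS => ?_⟩
  obtain ⟨R, C, hRC, hone⟩ := hS.exists_block_eq_one S12_zero_left S12_zero_right
  exact N12_no_zero_block _ hRC
    ⟨R, C, rfl, rfl, fun r hr c hc => (S12_apply_eq_one_iff r c).1 (hone r hr c hc)⟩
end
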